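/- Let X be a real Banach space and let (A,B) be a pair of nonempty closed bounded subsets of X that is weak approximatively compact. Then A_0 ≠ ∅ and B_0 ≠ ∅. -/

import Mathlib

open Filter Topology

variable {X : Type*} [NormedAddCommGroup X] [NormedSpace ℝ X]

/-- The distance between two sets: `d(A,B) = inf {‖x−y‖ : x ∈ A, y ∈ B}`. -/
noncomputable def setD (A B : Set X) : ℝ :=
  sInf {r : ℝ | ∃ x ∈ A, ∃ y ∈ B, r = ‖x - y‖}

/-- The diameter-type quantity `δ(A,B) = sup {‖x−y‖ : x ∈ A, y ∈ B}`. -/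
noncomputable def setDelta (A B : Set X) : ℝ :=
  sSup {r : ℝ | ∃ x ∈ A, ∃ y ∈ B, r = ‖x - y‖}

/-- `d(z,B) = inf {‖z−y‖ : y ∈ B}`. -/
noncomputable def ptD (z : X) (B : Set X) : ℝ :=
  sInf {r : ℝ | ∃ y ∈ B, r = ‖z - y‖}

/-- `δ(z,B) = sup {‖z−y‖ : y ∈ B}`. -/
noncomputable def ptDelta (z : X) (B : Set X) : ℝ :=
  sSup {r : ℝ | ∃ y ∈ B, r = ‖z - y‖}

/-- A pair `(A,B)` is semisharp proximal. -/
def SemisharpProximal (A B : Set X) : Prop :=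
  (∀ x ∈ A, ∀ y ∈ B, ∀ z ∈ B, ‖x - y‖ = setD A B → ‖x - z‖ = setD A B → y = z) ∧
  (∀ y ∈ B, ∀ x ∈ A, ∀ z ∈ A, ‖x - y‖ = setD A B → ‖z - y‖ = setD A B → x = z)

/-- The pair `(A,B)` has property UC. -/
def PropertyUC (A B : Set X) : Prop :=
  ∀ x y z : ℕ → X, (∀ n, x n ∈ A) → (∀ n, y n ∈ A) → (∀ n, z n ∈ B) →
    Tendsto (fun n => ‖x n - z n‖) atTop (𝓝 (setD A B)) →
    Tendsto (fun n => ‖y n - z n‖) atTop (𝓝 (setD A B)) →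
    Tendsto (fun n => ‖x n - y n‖) atTop (𝓝 (0 : ℝ))

/-- Weak convergence of a sequence. -/
def WeakConv (u : ℕ → X) (x : X) : Prop :=
  ∀ f : X →L[ℝ] ℝ, Tendsto (fun n => f (u n)) atTop (𝓝 (f x))

/-- The Kadec-Klee property of a normed space. -/
def KadecKleeProp (X : Type*) [NormedAddCommGroup X] [NormedSpace ℝ X] : Prop :=
  ∀ (u : ℕ → X) (x : X), WeakConv u x →
    Tendsto (fun n => ‖u n‖) atTop (𝓝 ‖x‖) → Tendsto u atTop (𝓝 x)

/-- `A` is weak approximatively compact with respect to `B`. -/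
def WeakApproxCompactWrt (A B : Set X) : Prop :=
  ∀ u : ℕ → X, (∀ n, u n ∈ A) →
    Tendsto (fun n => ptD (u n) B) atTop (𝓝 (setD A B)) →
    ∃ a ∈ A, ∃ φ : ℕ → ℕ, StrictMono φ ∧ WeakConv (u ∘ φ) a

/-- `A₀`, the set of points of `A` that realize the distance `d(A,B)`. -/
def proxA (A B : Set X) : Set X := {x ∈ A | ∃ y ∈ B, ‖x - y‖ = setD A B}

/-- `B₀`, the set of points of `B` that realize the distance `d(A,B)`. -/
def proxB (A B : Set X) : Set X := {y ∈ B | ∃ x ∈ A, ‖x - y‖ = setD A B}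

/-- The pair `(A,B)` is proximal: `A = A₀` and `B = B₀`. -/
def ProximalPair (A B : Set X) : Prop := A = proxA A B ∧ B = proxB A B

/-- `r(H₁,H₂) = inf {δ(x,H₂) : x ∈ H₁}`. -/
noncomputable def rr (H1 H2 : Set X) : ℝ := sInf {t : ℝ | ∃ x ∈ H1, t = ptDelta x H2}

/-- `R(H₁,H₂) = max {r(H₁,H₂), r(H₂,H₁)}`. -/
noncomputable def RR (H1 H2 : Set X) : ℝ := max (rr H1 H2) (rr H2 H1)

/-- `(H₁,H₂) ∈ Υ(A,B)`: nonempty closed bounded convex proximal sub-pairs of `(A,B)` at the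
same distance, with at least one of the two sets containing more than one point. -/
def Upsilon (A B H1 H2 : Set X) : Prop :=
  H1 ⊆ A ∧ H2 ⊆ B ∧ H1.Nonempty ∧ H2.Nonempty ∧ IsClosed H1 ∧ IsClosed H2 ∧
    Bornology.IsBounded H1 ∧ Bornology.IsBounded H2 ∧ Convex ℝ H1 ∧ Convex ℝ H2 ∧
    ProximalPair H1 H2 ∧ (¬ H1.Subsingleton ∨ ¬ H2.Subsingleton) ∧
    setD H1 H2 = setD A B

/-- `N(A,B) = sup {R(H₁,H₂)/δ(H₁,H₂) : (H₁,H₂) ∈ Υ(A,B)}`. -/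
noncomputable def NN (A B : Set X) : ℝ :=
  sSup {t : ℝ | ∃ H1 H2 : Set X, Upsilon A B H1 H2 ∧ t = RR H1 H2 / setDelta H1 H2}

/-- `(C₁,C₂) ∈ Ῡ(A,B)`: as `Υ(A,B)` but without requiring proximality. -/
def UpsilonBar (A B C1 C2 : Set X) : Prop :=
  C1 ⊆ A ∧ C2 ⊆ B ∧ C1.Nonempty ∧ C2.Nonempty ∧ IsClosed C1 ∧ IsClosed C2 ∧
    Bornology.IsBounded C1 ∧ Bornology.IsBounded C2 ∧ Convex ℝ C1 ∧ Convex ℝ C2 ∧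
    (¬ C1.Subsingleton ∨ ¬ C2.Subsingleton) ∧ setD C1 C2 = setD A B

/-- `c₀ = sup {R(C₁,C₂)/δ(C₁,C₂) : (C₁,C₂) ∈ Ῡ(A,B)}`. -/
noncomputable def cZero (A B : Set X) : ℝ :=
  sSup {t : ℝ | ∃ C1 C2 : Set X, UpsilonBar A B C1 C2 ∧ t = RR C1 C2 / setDelta C1 C2}

/-- `T` is a cyclic relatively nonexpansive mapping on `A ∪ B`. -/
def CyclicRelNonexpansive (A B : Set X) (T : X → X) : Prop :=
  Set.MapsTo T A B ∧ Set.MapsTo T B A ∧ ∀ x ∈ A, ∀ y ∈ B, ‖T x - T y‖ ≤ ‖x - y‖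

/-!
Take pairs `xₙ ∈ A`, `yₙ ∈ B` with `‖xₙ - yₙ‖ → d(A,B)`. Both sequences are minimizing, so weak
approximative compactness, applied first to `(xₙ)` and then to the corresponding subsequence of
`(yₙ)`, yields a common subsequence with `xₙ ⇀ a ∈ A` and `yₙ ⇀ b ∈ B`. The norm is weakly
sequentially lower semicontinuous (Hahn–Banach), so `‖a - b‖ ≤ d(A,B)`.
-/

namespace WeakConv

theorem comp {u : ℕ → X} {x : X} (h : WeakConv u x) {φ : ℕ → ℕ}
    (hφ : Tendsto φ atTop atTop) : WeakConv (u ∘ φ) x :=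
  fun f => (h f).comp hφ

theorem sub {u v : ℕ → X} {x y : X} (hu : WeakConv u x) (hv : WeakConv v y) :
    WeakConv (u - v) (x - y) := fun f => by
  simpa only [Pi.sub_apply, map_sub] using (hu f).sub (hv f)

theorem norm_le_of_tendsto {u : ℕ → X} {x : X} (h : WeakConv u x) {c : ℕ → ℝ} {L : ℝ}
    (hc : Tendsto c atTop (𝓝 L)) (huc : ∀ n, ‖u n‖ ≤ c n) : ‖x‖ ≤ L := by
  have hL : 0 ≤ L := ge_of_tendsto' hc fun n => (norm_nonneg _).trans (huc n)
  refine NormedSpace.norm_le_dual_bound ℝ x hL fun f => ?_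
  have hfu : Tendsto (fun n => ‖f (u n)‖) atTop (𝓝 ‖f x‖) := (h f).norm
  refine le_of_tendsto_of_tendsto' hfu (hc.mul_const ‖f‖) fun n => ?_
  calc ‖f (u n)‖ ≤ ‖f‖ * ‖u n‖ := f.le_opNorm _
    _ ≤ c n * ‖f‖ := by rw [mul_comm]; gcongr; exact huc n

end WeakConv

section NormedAddCommGroup

variable {E : Type*} [NormedAddCommGroup E]

theorem bddBelow_norm_sub_mem (A B : Set E) :
    BddBelow {r : ℝ | ∃ x ∈ A, ∃ y ∈ B, r = ‖x - y‖} :=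
  ⟨0, by rintro r ⟨x, -, y, -, rfl⟩; positivity⟩

theorem setD_le {A B : Set E} {x y : E} (hx : x ∈ A) (hy : y ∈ B) : setD A B ≤ ‖x - y‖ :=
  csInf_le (bddBelow_norm_sub_mem A B) ⟨x, hx, y, hy, rfl⟩

theorem ptD_le {z y : E} {B : Set E} (hy : y ∈ B) : ptD z B ≤ ‖z - y‖ :=
  csInf_le ⟨0, by rintro r ⟨y, -, rfl⟩; positivity⟩ ⟨y, hy, rfl⟩

theorem setD_le_ptD {A B : Set E} {z : E} (hz : z ∈ A) (hB : B.Nonempty) :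
    setD A B ≤ ptD z B := by
  obtain ⟨y, hy⟩ := hB
  exact le_csInf ⟨_, y, hy, rfl⟩ fun r ⟨y, hy, hr⟩ => hr ▸ setD_le hz hy

theorem setD_comm (A B : Set E) : setD B A = setD A B := by
  unfold setD
  congr 1
  ext r
  constructor
  · rintro ⟨y, hy, x, hx, rfl⟩; exact ⟨x, hx, y, hy, norm_sub_rev _ _⟩
  · rintro ⟨x, hx, y, hy, rfl⟩; exact ⟨y, hy, x, hx, norm_sub_rev _ _⟩

theorem exists_seq_tendsto_setD {A B : Set E} (hA : A.Nonempty) (hB : B.Nonempty) :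
    ∃ x y : ℕ → E, (∀ n, x n ∈ A) ∧ (∀ n, y n ∈ B) ∧
      Tendsto (fun n => ‖x n - y n‖) atTop (𝓝 (setD A B)) := by
  obtain ⟨a, ha⟩ := hA
  obtain ⟨b, hb⟩ := hB
  obtain ⟨r, -, hr, hrS⟩ := exists_seq_tendsto_sInf
    (⟨_, a, ha, b, hb, rfl⟩ : {r : ℝ | ∃ x ∈ A, ∃ y ∈ B, r = ‖x - y‖}.Nonempty)
    (bddBelow_norm_sub_mem A B)
  choose x hx y hy hxy using hrS
  exact ⟨x, y, hx, hy, funext hxy ▸ hr⟩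

theorem tendsto_ptD_of_tendsto_norm_sub {A B : Set E} {x y : ℕ → E} (hx : ∀ n, x n ∈ A)
    (hy : ∀ n, y n ∈ B) (hxy : Tendsto (fun n => ‖x n - y n‖) atTop (𝓝 (setD A B))) :
    Tendsto (fun n => ptD (x n) B) atTop (𝓝 (setD A B)) :=
  tendsto_of_tendsto_of_tendsto_of_le_of_le tendsto_const_nhds hxy
    (fun n => setD_le_ptD (hx n) ⟨_, hy n⟩) fun n => ptD_le (hy n)

end NormedAddCommGroup

theorem stmt17_general
    (A B : Set X) (hAne : A.Nonempty) (hBne : B.Nonempty)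
    (hwacA : WeakApproxCompactWrt A B) (hwacB : WeakApproxCompactWrt B A) :
    (proxA A B).Nonempty ∧ (proxB A B).Nonempty := by
  obtain ⟨x, y, hx, hy, hxy⟩ := exists_seq_tendsto_setD hAne hBne
  obtain ⟨a, ha, φ, hφ, hxa⟩ := hwacA x hx (tendsto_ptD_of_tendsto_norm_sub hx hy hxy)
  have hyx : Tendsto (fun n => ‖(y ∘ φ) n - (x ∘ φ) n‖) atTop (𝓝 (setD B A)) := by
    rw [setD_comm]
    simpa only [Function.comp_def, norm_sub_rev] using hxy.comp hφ.tendsto_atTop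
  obtain ⟨b, hb, ψ, hψ, hyb⟩ :=
    hwacB (y ∘ φ) (fun n => hy _)
      (tendsto_ptD_of_tendsto_norm_sub (fun n => hy _) (fun n => hx _) hyx)
  have hab : ‖a - b‖ ≤ setD A B :=
    ((hxa.comp hψ.tendsto_atTop).sub hyb).norm_le_of_tendsto (hxy.comp (hφ.comp hψ).tendsto_atTop)
      fun n => le_rfl
  have hdist : ‖a - b‖ = setD A B := le_antisymm hab (setD_le ha hb)
  exact ⟨⟨a, ha, b, hb, hdist⟩, ⟨b, hb, a, ha, hdist⟩⟩

theorem stmt17 [CompleteSpace X]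
    (A B : Set X) (hAne : A.Nonempty) (hBne : B.Nonempty)
    (hAcl : IsClosed A) (hBcl : IsClosed B)
    (hAbd : Bornology.IsBounded A) (hBbd : Bornology.IsBounded B)
    (hwacA : WeakApproxCompactWrt A B) (hwacB : WeakApproxCompactWrt B A) :
    (proxA A B).Nonempty ∧ (proxB A B).Nonempty :=
  stmt17_general A B hAne hBne hwacA hwacB
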